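/- arXiv:2104.02507 — 10 statements merged into one kernel-verified Lean document; each statement's English description precedes it below -/
import Mathlib

section
/- For every real number t ≥ 0, one has (√2 − 1)² · min(t, t²) ≤ (√(1+t) − 1)² ≤ min(t, t²). -/
theorem stmt0 (t : ℝ) (ht : 0 ≤ t) :
    (Real.sqrt 2 - 1) ^ 2 * min t (t ^ 2) ≤ (Real.sqrt (1 + t) - 1) ^ 2 ∧
    (Real.sqrt (1 + t) - 1) ^ 2 ≤ min t (t ^ 2) := by
  set s := Real.sqrt (1 + t) with hsdef
  have hs2 : s ^ 2 = 1 + t := Real.sq_sqrt (by linarith)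
  have hs0 : 0 ≤ s := Real.sqrt_nonneg _
  have hs1 : 1 ≤ s := by nlinarith
  have h2 : (Real.sqrt 2) ^ 2 = 2 := Real.sq_sqrt (by norm_num)
  have h20 : 0 ≤ Real.sqrt 2 := Real.sqrt_nonneg _
  have h21 : 1 ≤ Real.sqrt 2 := by nlinarith
  rcases le_total t 1 with h | h
  · have hmin : min t (t ^ 2) = t ^ 2 := by
      rw [min_eq_right]; nlinarith
    rw [hmin]
    have hsle : s ≤ Real.sqrt 2 := by
      apply Real.sqrt_le_sqrt; linarith
    constructor
    · have key : (Real.sqrt 2 - 1) * t ≤ s - 1 := by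
        nlinarith [mul_nonneg (mul_nonneg (sub_nonneg.2 hs1) (sub_nonneg.2 h21))
          (sub_nonneg.2 hsle)]
      calc (Real.sqrt 2 - 1) ^ 2 * t ^ 2 = ((Real.sqrt 2 - 1) * t) ^ 2 := by ring
        _ ≤ (s - 1) ^ 2 :=
          pow_le_pow_left₀ (mul_nonneg (by linarith) ht) key 2
    · nlinarith [sq_nonneg (s - 1), mul_nonneg (sub_nonneg.2 hs1) (sub_nonneg.2 hs1)]
  · have hmin : min t (t ^ 2) = t := by
      rw [min_eq_left]; nlinarith
    rw [hmin]
    have hsge : Real.sqrt 2 ≤ s := by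
      apply Real.sqrt_le_sqrt; linarith
    constructor
    · nlinarith [mul_nonneg (mul_nonneg (sub_nonneg.2 hs1) (sub_nonneg.2 h21))
        (sub_nonneg.2 hsge)]
    · nlinarith [sq_nonneg (s - 1)]
end

section
/- Let r ∈ (0,1] and I(t) = (t+r)²/(4r). Then 1/2 + max(0, sup_{t ≥ 0} { t − I(t) + min(1, I(t))/2 }) equals 1/2 + r if r ≤ 1/4, and equals 1 − (1 − √r)² if 1/4 < r ≤ 1. -/
theorem stmt3 (r : ℝ) (hr0 : 0 < r) (hr1 : r ≤ 1) :
    (r ≤ 1 / 4 →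
      1 / 2 + max 0 (sSup ((fun t : ℝ =>
          t - (t + r) ^ 2 / (4 * r) + min 1 ((t + r) ^ 2 / (4 * r)) / 2) '' Set.Ici 0))
        = 1 / 2 + r) ∧
    (1 / 4 < r →
      1 / 2 + max 0 (sSup ((fun t : ℝ =>
          t - (t + r) ^ 2 / (4 * r) + min 1 ((t + r) ^ 2 / (4 * r)) / 2) '' Set.Ici 0))
        = 1 - (1 - Real.sqrt r) ^ 2) := by
  set f : ℝ → ℝ := fun t =>
      t - (t + r) ^ 2 / (4 * r) + min 1 ((t + r) ^ 2 / (4 * r)) / 2 with hf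
  have hr4 : (0:ℝ) < 4 * r := by linarith
  constructor
  · -- r ≤ 1/4
    intro h14
    have hsup : sSup (f '' Set.Ici 0) = r := by
      apply le_antisymm
      · apply csSup_le ⟨f 0, Set.mem_image_of_mem f (le_refl 0)⟩
        rintro x ⟨t, ht, rfl⟩
        have he : (t + r) ^ 2 / (4 * r) * (4 * r) = (t + r) ^ 2 :=
          div_mul_cancel₀ _ (ne_of_gt hr4)
        have hmin : min 1 ((t + r) ^ 2 / (4 * r)) ≤ (t + r) ^ 2 / (4 * r) :=
          min_le_right _ _
        simp only [hf]
        nlinarith [sq_nonneg (t - 3 * r)]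
      · apply le_csSup
        · refine ⟨r, ?_⟩
          rintro x ⟨t, ht, rfl⟩
          have he : (t + r) ^ 2 / (4 * r) * (4 * r) = (t + r) ^ 2 :=
            div_mul_cancel₀ _ (ne_of_gt hr4)
          have hmin : min 1 ((t + r) ^ 2 / (4 * r)) ≤ (t + r) ^ 2 / (4 * r) :=
            min_le_right _ _
          simp only [hf]
          nlinarith [sq_nonneg (t - 3 * r)]
        · refine ⟨3 * r, Set.mem_Ici.mpr (by positivity), ?_⟩
          have h4r : (3 * r + r) ^ 2 / (4 * r) = 4 * r := by
            field_simp; ring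
          simp only [hf, h4r]
          rw [min_eq_right (by linarith)]
          ring
      
    rw [hsup, max_eq_right hr0.le]
  · -- 1/4 < r
    intro h14
    set s := Real.sqrt r with hsdef
    have hs2 : s ^ 2 = r := Real.sq_sqrt hr0.le
    have hs0 : 0 < s := Real.sqrt_pos.mpr hr0
    have hs1 : s ≤ 1 := by
      nlinarith
    have hsh : 1 / 2 < s := by nlinarith
    have hsup : sSup (f '' Set.Ici 0) = 2 * s - r - 1 / 2 := by
      have bound : ∀ t : ℝ, 0 ≤ t → f t ≤ 2 * s - r - 1 / 2 := by
        intro t ht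
        have he : (t + r) ^ 2 / (4 * r) * (4 * r) = (t + r) ^ 2 :=
          div_mul_cancel₀ _ (ne_of_gt hr4)
        rcases le_total ((t + r) ^ 2 / (4 * r)) 1 with hI | hI
        · have hmin : min 1 ((t + r) ^ 2 / (4 * r)) = (t + r) ^ 2 / (4 * r) :=
            min_eq_right hI
          have hle : (t + r) ^ 2 ≤ 4 * r := by nlinarith
          have h1 : t + r ≤ 2 * s := by nlinarith
          have h2 : t + r ≤ 8 * r - 2 * s := by nlinarith
          have hprod : 0 ≤ (2 * s - (t + r)) * (8 * r - 2 * s - (t + r)) :=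
            mul_nonneg (by linarith) (by linarith)
          simp only [hf, hmin]
          nlinarith
        · have hmin : min 1 ((t + r) ^ 2 / (4 * r)) = 1 := min_eq_left hI
          have hge : 4 * r ≤ (t + r) ^ 2 := by nlinarith
          have h1 : 2 * s ≤ t + r := by nlinarith
          have h2 : 4 * r - 2 * s ≤ t + r := by nlinarith
          have hprod : 0 ≤ ((t + r) - 2 * s) * ((t + r) - 4 * r + 2 * s) :=
            mul_nonneg (by linarith) (by linarith)
          simp only [hf, hmin]
          nlinarith
      apply le_antisymm
      · apply csSup_le ⟨f 0, Set.mem_image_of_mem f (le_refl 0)⟩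
        rintro x ⟨t, ht, rfl⟩
        exact bound t ht
      · apply le_csSup
        · exact ⟨2 * s - r - 1 / 2, by rintro x ⟨t, ht, rfl⟩; exact bound t ht⟩
        · refine ⟨2 * s - r, Set.mem_Ici.mpr (by nlinarith), ?_⟩
          have hI : (2 * s - r + r) ^ 2 / (4 * r) = 1 := by
            rw [div_eq_one_iff_eq (ne_of_gt hr4)]; nlinarith
          simp only [hf, hI]
          rw [min_self]
          ring
    rw [hsup, max_eq_right (by nlinarith [sq_nonneg (1 - s)])]
    nlinarith [sq_nonneg (1 - s)]
end

section
/- Fix r > 0 and σ² > 0 with σ² ≠ 1. For y ∈ ℝ, the infimum of (t − √r/(σ²−1))² over all t ∈ ℝ satisfying y = −r/(σ²−1) + ((σ²−1)/σ²)·t² equals (σ²/(σ²−1)²)·(√((σ²−1)y + r) − √(r/σ²))² when (σ²−1)y + r ≥ 0, and equals +∞ (the infimum over the empty set) when (σ²−1)y + r < 0. -/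
lemma ereal_coe_inf (a b : ℝ) : ((a : ℝ) : EReal) ⊓ ((b : ℝ) : EReal) = ((min a b : ℝ) : EReal) := by
  rcases le_total a b with h | h
  · rw [min_eq_left h, inf_eq_left.mpr (EReal.coe_le_coe_iff.mpr h)]
  · rw [min_eq_right h, inf_eq_right.mpr (EReal.coe_le_coe_iff.mpr h)]

theorem stmt4 (r σ2 y : ℝ) (hr : 0 < r) (hσ : 0 < σ2) (hσ1 : σ2 ≠ 1) :
    (0 ≤ (σ2 - 1) * y + r →
      sInf ((fun t : ℝ => (((t - Real.sqrt r / (σ2 - 1)) ^ 2 : ℝ) : EReal)) ''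
          {t : ℝ | y = -r / (σ2 - 1) + ((σ2 - 1) / σ2) * t ^ 2})
        = (((σ2 / (σ2 - 1) ^ 2) *
            (Real.sqrt ((σ2 - 1) * y + r) - Real.sqrt (r / σ2)) ^ 2 : ℝ) : EReal)) ∧
    ((σ2 - 1) * y + r < 0 →
      sInf ((fun t : ℝ => (((t - Real.sqrt r / (σ2 - 1)) ^ 2 : ℝ) : EReal)) ''
          {t : ℝ | y = -r / (σ2 - 1) + ((σ2 - 1) / σ2) * t ^ 2})
        = ⊤) := by
  have hσ0 : σ2 ≠ 0 := ne_of_gt hσ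
  have hd : σ2 - 1 ≠ 0 := sub_ne_zero.mpr hσ1
  have hd2 : (0:ℝ) < (σ2 - 1) ^ 2 := by positivity
  set A := (σ2 - 1) * y + r with hA
  have hset : ∀ t : ℝ, (y = -r / (σ2 - 1) + ((σ2 - 1) / σ2) * t ^ 2) ↔
      t ^ 2 = σ2 * A / (σ2 - 1) ^ 2 := by
    intro t
    rw [hA]
    constructor
    · intro h
      field_simp at h ⊢
      nlinarith [h]
    · intro h
      field_simp at h ⊢
      nlinarith [h]
  constructor
  · intro hA0
    set s := Real.sqrt (σ2 * A) / |σ2 - 1| with hs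
    have hσA : 0 ≤ σ2 * A := by positivity
    have hs0 : 0 ≤ s := by positivity
    have hssq : s ^ 2 = σ2 * A / (σ2 - 1) ^ 2 := by
      rw [hs, div_pow, Real.sq_sqrt hσA, sq_abs]
    have hsetpair : {t : ℝ | y = -r / (σ2 - 1) + ((σ2 - 1) / σ2) * t ^ 2} = {s, -s} := by
      ext t
      rw [Set.mem_setOf_eq, hset t, ← hssq]
      constructor
      · intro h
        have h0 : (t - s) * (t + s) = 0 := by linear_combination h
        rcases mul_eq_zero.mp h0 with h' | h'
        · left; exact sub_eq_zero.mp h'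
        · right; exact eq_neg_of_add_eq_zero_left h'
      · rintro (h | h) <;> rw [h] <;> ring
    rw [hsetpair, Set.image_pair, sInf_pair]
    set c := Real.sqrt r / (σ2 - 1) with hc
    have h1 : Real.sqrt σ2 * Real.sqrt (r / σ2) = Real.sqrt r := by
      rw [← Real.sqrt_mul hσ.le]
      congr 1
      field_simp
    have h2 : Real.sqrt (σ2 * A) = Real.sqrt σ2 * Real.sqrt A := Real.sqrt_mul hσ.le A
    have hsr : 0 ≤ Real.sqrt r := Real.sqrt_nonneg r
    have hsqσ : Real.sqrt σ2 ^ 2 = σ2 := Real.sq_sqrt hσ.le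
    have key : min ((s - c)^2) ((-s - c)^2)
        = σ2 / (σ2 - 1) ^ 2 * (Real.sqrt A - Real.sqrt (r / σ2)) ^ 2 := by
      rcases lt_or_gt_of_ne hσ1 with hlt | hgt
      · have hcle : c ≤ 0 := div_nonpos_of_nonneg_of_nonpos hsr (by linarith)
        have habs : |σ2 - 1| = -(σ2 - 1) := abs_of_neg (by linarith)
        have hmin : min ((s - c)^2) ((-s - c)^2) = (-s - c)^2 := by
          apply min_eq_right
          nlinarith [mul_nonneg hs0 (neg_nonneg.mpr hcle)]
        have hsc : -s - c = (Real.sqrt σ2 / (σ2 - 1)) * (Real.sqrt A - Real.sqrt (r/σ2)) := by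
          rw [hs, habs, div_neg, hc, h2, ← h1]
          ring
        rw [hmin, hsc, mul_pow, div_pow, hsqσ]
      · have hcge : 0 ≤ c := div_nonneg hsr (by linarith)
        have habs : |σ2 - 1| = σ2 - 1 := abs_of_pos (by linarith)
        have hmin : min ((s - c)^2) ((-s - c)^2) = (s - c)^2 := by
          apply min_eq_left
          nlinarith [mul_nonneg hs0 hcge]
        have hsc : s - c = (Real.sqrt σ2 / (σ2 - 1)) * (Real.sqrt A - Real.sqrt (r/σ2)) := by
          rw [hs, hc, habs, h2, ← h1]
          ring
        rw [hmin, hsc, mul_pow, div_pow, hsqσ]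
    rw [ereal_coe_inf, key]
  · intro hA0
    have hempty : {t : ℝ | y = -r / (σ2 - 1) + ((σ2 - 1) / σ2) * t ^ 2} = ∅ := by
      ext t
      simp only [Set.mem_setOf_eq, Set.mem_empty_iff_false, iff_false]
      intro h
      rw [hset t] at h
      have : σ2 * A / (σ2 - 1) ^ 2 < 0 := div_neg_of_neg_of_pos (by nlinarith) hd2
      nlinarith [sq_nonneg t]
    rw [hempty, Set.image_empty, sInf_empty]
end

section
/- Fix r > 0 and 0 < σ² < 2 (σ² ≠ 1). Then sup over s ≥ 0 of (−(√s − √r)²/σ² + min(1, s)/2) equals r/(2 − σ²) if 2√r + σ² ≤ 2, and equals 1/2 − (max(1−√r, 0))²/σ² if 2√r + σ² > 2. -/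
private lemma frac1 (σ2 a m : ℝ) (h0 : 0 < σ2) :
    -a / σ2 + m / 2 = (m * σ2 - 2 * a) / (2 * σ2) := by
  field_simp; ring

theorem stmt6 (r σ2 : ℝ) (hr : 0 < r) (h0 : 0 < σ2) (h2 : σ2 < 2) (h1 : σ2 ≠ 1) :
    (2 * Real.sqrt r + σ2 ≤ 2 →
      sSup ((fun s : ℝ => -(Real.sqrt s - Real.sqrt r) ^ 2 / σ2 + min 1 s / 2) '' Set.Ici 0)
        = r / (2 - σ2)) ∧
    (2 < 2 * Real.sqrt r + σ2 →
      sSup ((fun s : ℝ => -(Real.sqrt s - Real.sqrt r) ^ 2 / σ2 + min 1 s / 2) '' Set.Ici 0)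
        = 1 / 2 - (max (1 - Real.sqrt r) 0) ^ 2 / σ2) := by
  set v := Real.sqrt r with hv_def
  have hv : 0 < v := Real.sqrt_pos.2 hr
  have hv2 : v ^ 2 = r := Real.sq_sqrt hr.le
  have hσ2 : (0:ℝ) < 2 - σ2 := by linarith
  have h2σ : (0:ℝ) < 2 * σ2 := by linarith
  set f : ℝ → ℝ := fun s : ℝ => -(Real.sqrt s - v) ^ 2 / σ2 + min 1 s / 2 with hf
  have hne : (f '' Set.Ici 0).Nonempty := ⟨f 0, 0, Set.self_mem_Ici, rfl⟩
  -- unconditional bound by r/(2-σ2)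
  have bd1 : ∀ s ∈ Set.Ici (0:ℝ), f s ≤ v ^ 2 / (2 - σ2) := by
    intro s hs
    have hu : 0 ≤ Real.sqrt s := Real.sqrt_nonneg s
    have hu2 : Real.sqrt s ^ 2 = s := Real.sq_sqrt hs
    simp only [hf]
    set u := Real.sqrt s with hu_def
    rw [← hu2, frac1 _ _ _ h0, div_le_div_iff₀ h2σ hσ2]
    have hm : min 1 (u ^ 2) ≤ u ^ 2 := min_le_right _ _
    nlinarith [sq_nonneg ((2 - σ2) * u - 2 * v),
      mul_nonneg (mul_nonneg h0.le hσ2.le) (sub_nonneg.2 hm)]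
  constructor
  · intro hc
    rw [← hv2]
    apply le_antisymm
    · exact csSup_le hne (by rintro x ⟨s, hs, rfl⟩; exact bd1 s hs)
    · have hbdd : BddAbove (f '' Set.Ici 0) :=
        ⟨v ^ 2 / (2 - σ2), by rintro x ⟨s, hs, rfl⟩; exact bd1 s hs⟩
      refine le_csSup hbdd ⟨(2 * v / (2 - σ2)) ^ 2, Set.mem_Ici.2 (by positivity), ?_⟩
      have hsq : Real.sqrt ((2 * v / (2 - σ2)) ^ 2) = 2 * v / (2 - σ2) :=
        Real.sqrt_sq (by positivity)
      have hle1 : (2 * v / (2 - σ2)) ^ 2 ≤ 1 := by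
        have h01 : 2 * v / (2 - σ2) ≤ 1 := (div_le_one hσ2).2 (by linarith)
        have h00 : 0 ≤ 2 * v / (2 - σ2) := by positivity
        nlinarith
      simp only [hf, hsq, min_eq_right hle1]
      field_simp
      ring
  · intro hc
    have bd2 : ∀ s ∈ Set.Ici (0:ℝ), f s ≤ 1 / 2 - (max (1 - v) 0) ^ 2 / σ2 := by
      intro s hs
      have hu : 0 ≤ Real.sqrt s := Real.sqrt_nonneg s
      have hu2 : Real.sqrt s ^ 2 = s := Real.sq_sqrt hs
      simp only [hf]
      set u := Real.sqrt s with hu_def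
      rw [← hu2, frac1 _ _ _ h0,
        show (1:ℝ) / 2 - (max (1 - v) 0) ^ 2 / σ2
            = (1 * σ2 - 2 * (max (1 - v) 0) ^ 2) / (2 * σ2) by field_simp,
        div_le_div_iff₀ h2σ h2σ]
      rcases le_or_gt 1 (u ^ 2) with hs1 | hs1
      · have hu1 : (1:ℝ) ≤ u := by nlinarith
        rw [min_eq_left hs1]
        rcases le_or_gt 1 v with hv1 | hv1
        · rw [max_eq_right (by linarith : 1 - v ≤ 0)]
          nlinarith [mul_nonneg h2σ.le (sq_nonneg (u - v))]
        · rw [max_eq_left (by linarith : (0:ℝ) ≤ 1 - v)]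
          nlinarith [mul_nonneg h2σ.le (mul_nonneg (sub_nonneg.2 hu1)
            (show (0:ℝ) ≤ u + 1 - 2 * v by linarith))]
      · have hu1 : u ≤ 1 := by nlinarith
        rw [min_eq_right hs1.le]
        rcases le_or_gt 1 v with hv1 | hv1
        · rw [max_eq_right (by linarith : 1 - v ≤ 0)]
          nlinarith [mul_nonneg h2σ.le (mul_nonneg h0.le
              (show (0:ℝ) ≤ 1 - u ^ 2 by nlinarith)),
            mul_nonneg h2σ.le (sq_nonneg (u - v))]
        · rw [max_eq_left (by linarith : (0:ℝ) ≤ 1 - v)]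
          nlinarith [mul_nonneg h2σ.le (mul_nonneg (sub_nonneg.2 hu1)
            (show (0:ℝ) ≤ σ2 * (1 + u) - 2 * u - 2 + 4 * v by
              nlinarith [mul_nonneg hσ2.le (sub_nonneg.2 hu1)]))]
    apply le_antisymm
    · exact csSup_le hne (by rintro x ⟨s, hs, rfl⟩; exact bd2 s hs)
    · have hbdd : BddAbove (f '' Set.Ici 0) :=
        ⟨1 / 2 - (max (1 - v) 0) ^ 2 / σ2, by rintro x ⟨s, hs, rfl⟩; exact bd2 s hs⟩
      rcases le_or_gt 1 v with hv1 | hv1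
      · refine le_csSup hbdd ⟨r, Set.mem_Ici.2 hr.le, ?_⟩
        have hr1 : (1:ℝ) ≤ r := by nlinarith
        simp only [hf, ← hv_def, min_eq_left hr1, max_eq_right (by linarith : 1 - v ≤ 0)]
        simp [sub_self]
      · refine le_csSup hbdd ⟨1, Set.mem_Ici.2 (by norm_num), ?_⟩
        simp only [hf, Real.sqrt_one, min_self, max_eq_left (by linarith : (0:ℝ) ≤ 1 - v)]
        ring
end

section
/- Let r > 0 and ρ ∈ (−1, 1). For y ∈ ℝ, the infimum of (t₁² + t₂² − 2t₁t₂ρ)/(4r(1 − ρ²)) over all (t₁, t₂) ∈ ℝ² with y = max(t₁, t₂) equals y²/(4r) if y ≥ 0, and equals y²/(2r(1+ρ)) if y < 0. -/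
theorem stmt7 (r ρ y : ℝ) (hr : 0 < r) (hρ1 : -1 < ρ) (hρ2 : ρ < 1) :
    (0 ≤ y →
      sInf {x : ℝ | ∃ t₁ t₂ : ℝ, y = max t₁ t₂ ∧
          x = (t₁ ^ 2 + t₂ ^ 2 - 2 * t₁ * t₂ * ρ) / (4 * r * (1 - ρ ^ 2))}
        = y ^ 2 / (4 * r)) ∧
    (y < 0 →
      sInf {x : ℝ | ∃ t₁ t₂ : ℝ, y = max t₁ t₂ ∧
          x = (t₁ ^ 2 + t₂ ^ 2 - 2 * t₁ * t₂ * ρ) / (4 * r * (1 - ρ ^ 2))}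
        = y ^ 2 / (2 * r * (1 + ρ))) := by
  have h1ρ : (0:ℝ) < 1 + ρ := by linarith
  have h2ρ : (0:ℝ) < 1 - ρ := by linarith
  have hsq : (0:ℝ) < 1 - ρ ^ 2 := by nlinarith [mul_pos h1ρ h2ρ]
  have hden : 0 < 4 * r * (1 - ρ ^ 2) := by positivity
  constructor
  · intro hy
    apply IsLeast.csInf_eq
    constructor
    · refine ⟨y, ρ * y, ?_, ?_⟩
      · rw [max_eq_left (by nlinarith)]
      · rw [div_eq_div_iff (by positivity) hden.ne']; ring
    · rintro x ⟨t₁, t₂, hmax, rfl⟩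
      rw [div_le_div_iff₀ (by positivity) hden]
      rcases le_total t₁ t₂ with h | h
      · rw [max_eq_right h] at hmax
        subst hmax
        nlinarith [sq_nonneg (t₁ - ρ * y), sq_nonneg y]
      · rw [max_eq_left h] at hmax
        subst hmax
        nlinarith [sq_nonneg (t₂ - ρ * y), sq_nonneg y]
  · intro hy
    apply IsLeast.csInf_eq
    constructor
    · refine ⟨y, y, by rw [max_self], ?_⟩
      rw [div_eq_div_iff (by positivity) hden.ne']; ring
    · rintro x ⟨t₁, t₂, hmax, rfl⟩
      rw [div_le_div_iff₀ (by positivity) hden]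
      rcases le_total t₁ t₂ with h | h
      · rw [max_eq_right h] at hmax
        subst hmax
        nlinarith [mul_nonneg (mul_nonneg (sub_nonneg.mpr h) (by nlinarith : (0:ℝ) ≤ 2*y*ρ - t₁ - y)) hr.le]
      · rw [max_eq_left h] at hmax
        subst hmax
        nlinarith [mul_nonneg (mul_nonneg (sub_nonneg.mpr h) (by nlinarith : (0:ℝ) ≤ 2*y*ρ - t₂ - y)) hr.le]
end

section
/- Let r > 0 and t ∈ ℝ. The infimum over y₁ ∈ ℝ with |y₁| ≥ t of the quantity (t+2r)²/(4r) + (y₁² − (t+2r)|y₁|)/(2r) equals: (t+2r)²/(4r) if t < −2r; (t+2r)²/(8r) if |t| ≤ 2r; and (t+2r)²/(4r) − t if t > 2r. -/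
theorem stmt8 (r t : ℝ) (hr : 0 < r) :
    (t < -(2 * r) →
      sInf {x : ℝ | ∃ y₁ : ℝ, t ≤ |y₁| ∧
          x = (t + 2 * r) ^ 2 / (4 * r) + (y₁ ^ 2 - (t + 2 * r) * |y₁|) / (2 * r)}
        = (t + 2 * r) ^ 2 / (4 * r)) ∧
    (|t| ≤ 2 * r →
      sInf {x : ℝ | ∃ y₁ : ℝ, t ≤ |y₁| ∧
          x = (t + 2 * r) ^ 2 / (4 * r) + (y₁ ^ 2 - (t + 2 * r) * |y₁|) / (2 * r)}
        = (t + 2 * r) ^ 2 / (8 * r)) ∧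
    (2 * r < t →
      sInf {x : ℝ | ∃ y₁ : ℝ, t ≤ |y₁| ∧
          x = (t + 2 * r) ^ 2 / (4 * r) + (y₁ ^ 2 - (t + 2 * r) * |y₁|) / (2 * r)}
        = (t + 2 * r) ^ 2 / (4 * r) - t) := by
  refine ⟨fun h1 => ?_, fun h2 => ?_, fun h3 => ?_⟩
  · apply IsLeast.csInf_eq
    constructor
    · exact ⟨0, by simp; linarith, by simp⟩
    · rintro x ⟨y, hy, rfl⟩
      have hs := sq_abs y
      have ha := abs_nonneg y
      have : 0 ≤ (y ^ 2 - (t + 2 * r) * |y|) / (2 * r) := by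
        apply div_nonneg _ (by linarith)
        nlinarith
      linarith
  · apply IsLeast.csInf_eq
    constructor
    · refine ⟨(t + 2 * r) / 2, ?_, ?_⟩
      · rw [abs_of_nonneg (by cases abs_le.mp h2; linarith)]
        cases abs_le.mp h2
        linarith
      · rw [abs_of_nonneg (by cases abs_le.mp h2; linarith)]
        field_simp
        ring
    · rintro x ⟨y, hy, rfl⟩
      have hs := sq_abs y
      have ha := abs_nonneg y
      rw [div_add_div _ _ (by positivity : (4:ℝ) * r ≠ 0) (by positivity : (2:ℝ) * r ≠ 0),
        div_le_div_iff₀ (by positivity) (by positivity)]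
      nlinarith [sq_nonneg (|y| - (t + 2 * r) / 2), sq_nonneg r, mul_pos hr hr]
  · apply IsLeast.csInf_eq
    constructor
    · refine ⟨t, ?_, ?_⟩
      · rw [abs_of_nonneg (by linarith)]
      · rw [abs_of_nonneg (by linarith)]
        field_simp
        ring
    · rintro x ⟨y, hy, rfl⟩
      have hs := sq_abs y
      have ha := abs_nonneg y
      have key : 0 ≤ (y ^ 2 - (t + 2 * r) * |y|) / (2 * r) + t := by
        rw [← sub_nonneg] at *
        have : 0 ≤ (y ^ 2 - (t + 2 * r) * |y| + 2 * r * t) / (2 * r) := by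
          apply div_nonneg _ (by linarith)
          nlinarith
        have e : (y ^ 2 - (t + 2 * r) * |y| + 2 * r * t) / (2 * r)
            = (y ^ 2 - (t + 2 * r) * |y|) / (2 * r) + t := by
          field_simp
        linarith [e ▸ this]
      linarith
end

section
/- Let 0 < r ≤ 1 and define I(t) = (t+2r)²/(4r) for t < −2r, I(t) = (t+2r)²/(8r) for |t| ≤ 2r, and I(t) = (t+2r)²/(4r) − t for t > 2r. Then 1/2 + max(0, sup_{t ≥ 0} { t − I(t) + min(1, I(t))/2 }) equals (3/2)r + 1/2 if r ≤ 1/5, equals √(1 − (1−2r)²) if 1/5 < r ≤ 1/2, and equals 1 if 1/2 < r ≤ 1. -/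
/-!
Write `g(t) = t - I(t) + min(1, I(t))/2 = min(t - I(t)/2, t - I(t) + 1/2)`. On `t ≥ 0` one has
`t - I(t)/2 = 3r/2 - (t - 4r)²/(8r)` for `t ≥ 2r`, `t - I(t)/2 ≤ r` for `t ≤ 2r`, and `t ≤ I(t)`
with equality at `t = 2r`. For `r ≤ 1/5` the maximum of `t - I/2` is attained at
`t = 4r`, where `I = 5r ≤ 1`; for `r > 1/2` the maximum of `t - I + 1/2` is attained at `t = 2r`,
where `I = 2r ≥ 1`. In between, both maximisers lie on the wrong side of the level set `I = 1`, and
`g` is maximised where the two branches cross: at `s ≥ 2r` with `s² = 4r(1 - r)`, `I(s) = 1`.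
-/

open Set

noncomputable section

namespace GaoMa

def gain (I : ℝ → ℝ) (t : ℝ) : ℝ := t - I t + min 1 (I t) / 2

theorem gain_le_sub_half (I : ℝ → ℝ) (t : ℝ) : gain I t ≤ t - I t / 2 := by
  have := min_le_right 1 (I t)
  unfold gain; linarith

theorem gain_le_sub_add_half (I : ℝ → ℝ) (t : ℝ) : gain I t ≤ t - I t + 1 / 2 := by
  have := min_le_left 1 (I t)
  unfold gain; linarith

theorem gain_eq_sub_half {I : ℝ → ℝ} {t : ℝ} (h : I t ≤ 1) : gain I t = t - I t / 2 := by
  rw [gain, min_eq_right h]; ring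

theorem gain_eq_sub_add_half {I : ℝ → ℝ} {t : ℝ} (h : 1 ≤ I t) : gain I t = t - I t + 1 / 2 := by
  rw [gain, min_eq_left h]

/-- `I` on `t ≥ 0`; both branches equal `2r` at `t = 2r`. -/
def rate (r t : ℝ) : ℝ :=
  if t ≤ 2 * r then (t + 2 * r) ^ 2 / (8 * r) else (t + 2 * r) ^ 2 / (4 * r) - t

variable {r t : ℝ}

theorem rate_mul_of_le (hr : 0 < r) (ht : t ≤ 2 * r) : rate r t * (8 * r) = (t + 2 * r) ^ 2 := by
  rw [rate, if_pos ht]; field_simp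

theorem rate_mul_of_two_mul_le (hr : 0 < r) (ht : 2 * r ≤ t) :
    rate r t * (4 * r) = t ^ 2 + 4 * r ^ 2 := by
  rcases ht.lt_or_eq with ht | rfl
  · rw [rate, if_neg ht.not_ge]; field_simp; ring
  · rw [rate, if_pos le_rfl]; field_simp; ring

theorem eqOn_rate {I : ℝ → ℝ}
    (hI2 : ∀ t : ℝ, |t| ≤ 2 * r → I t = (t + 2 * r) ^ 2 / (8 * r))
    (hI3 : ∀ t : ℝ, 2 * r < t → I t = (t + 2 * r) ^ 2 / (4 * r) - t) :
    EqOn I (rate r) (Ici 0) := by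
  intro t (ht : 0 ≤ t)
  rw [rate]
  split_ifs with h
  · exact hI2 t (by rwa [abs_of_nonneg ht])
  · exact hI3 t (not_le.1 h)

theorem sub_rate_nonpos (hr : 0 < r) : t - rate r t ≤ 0 := by
  rcases le_or_gt t (2 * r) with h | h
  · nlinarith [rate_mul_of_le hr h, sq_nonneg (t - 2 * r)]
  · nlinarith [rate_mul_of_two_mul_le hr h.le, sq_nonneg (t - 2 * r)]

theorem sub_half_rate_le_of_le (hr : 0 < r) (h : t ≤ 2 * r) :
    t - rate r t / 2 ≤ r := by
  nlinarith [rate_mul_of_le hr h, mul_nonneg (sub_nonneg.2 h) (by linarith : 0 ≤ 10 * r - t)]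

theorem sub_half_rate_le (hr : 0 < r) : t - rate r t / 2 ≤ 3 / 2 * r := by
  rcases le_or_gt t (2 * r) with h | h
  · linarith [sub_half_rate_le_of_le hr h]
  · nlinarith [rate_mul_of_two_mul_le hr h.le, sq_nonneg (t - 4 * r)]

theorem rate_eq_one {s : ℝ} (hr : 0 < r) (hs : s ^ 2 = 4 * r - 4 * r ^ 2) (h : 2 * r ≤ s) :
    rate r s = 1 := by
  have := rate_mul_of_two_mul_le hr h
  refine mul_right_cancel₀ (by positivity : 4 * r ≠ 0) ?_
  linarith

/-- Beyond `2r` the bound `s - 1/2` follows from `(s - t)(8r - s - t) ≥ 0` for `t ≤ s` and from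
`(t - s)(t + s - 4r) ≥ 0` for `t ≥ s`. -/
theorem gain_rate_le_of_two_mul_lt {s : ℝ} (hr : 0 < r) (hs : s ^ 2 = 4 * r - 4 * r ^ 2)
    (h2r : 2 * r ≤ s) (h4r : s ≤ 4 * r) (ht : 2 * r < t) : gain (rate r) t ≤ s - 1 / 2 := by
  have hrate := rate_mul_of_two_mul_le hr ht.le
  rcases le_or_gt t s with hts | hst
  · nlinarith [gain_le_sub_half (rate r) t,
      mul_nonneg (sub_nonneg.2 hts) (by linarith : 0 ≤ 8 * r - t - s)]
  · nlinarith [gain_le_sub_add_half (rate r) t,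
      mul_nonneg (sub_nonneg.2 hst.le) (by linarith : 0 ≤ t + s - 4 * r)]

theorem isGreatest_gain_rate_of_le (hr : 0 < r) (h : r ≤ 1 / 5) :
    IsGreatest (gain (rate r) '' Ici 0) (3 / 2 * r) := by
  have hrate : rate r (4 * r) = 5 * r := by
    have := rate_mul_of_two_mul_le hr (by linarith : 2 * r ≤ 4 * r)
    refine mul_right_cancel₀ (by positivity : 4 * r ≠ 0) ?_
    linarith
  refine ⟨⟨4 * r, mem_Ici.2 (by positivity), ?_⟩, forall_mem_image.2 fun t _ => ?_⟩
  · rw [gain_eq_sub_half (by linarith), hrate]; ring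
  · exact (gain_le_sub_half _ t).trans (sub_half_rate_le hr)

theorem isGreatest_gain_rate_of_lt (hr : 1 / 2 < r) :
    IsGreatest (gain (rate r) '' Ici 0) (1 / 2) := by
  have hr0 : 0 < r := by linarith
  have hrate : rate r (2 * r) = 2 * r := by
    have := rate_mul_of_le hr0 le_rfl
    refine mul_right_cancel₀ (by positivity : 8 * r ≠ 0) ?_
    linarith
  refine ⟨⟨2 * r, mem_Ici.2 (by positivity), ?_⟩, forall_mem_image.2 fun t _ => ?_⟩
  · rw [gain_eq_sub_add_half (by linarith), hrate]; ring
  · linarith [gain_le_sub_add_half (rate r) t, sub_rate_nonpos (t := t) hr0]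

theorem isGreatest_gain_rate_sqrt (h1 : 1 / 5 < r) (h2 : r ≤ 1 / 2) :
    IsGreatest (gain (rate r) '' Ici 0) (√(1 - (1 - 2 * r) ^ 2) - 1 / 2) := by
  have hr : 0 < r := by linarith
  set s := √(1 - (1 - 2 * r) ^ 2)
  have hs : s ^ 2 = 4 * r - 4 * r ^ 2 := by
    rw [Real.sq_sqrt (by nlinarith)]; ring
  have hs0 : 0 ≤ s := Real.sqrt_nonneg _
  have h2r : 2 * r ≤ s := by nlinarith
  have h4r : s ≤ 4 * r := by nlinarith
  have hrs : r + 1 / 2 ≤ s := by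
    nlinarith [mul_nonneg (by linarith : 0 ≤ r - 1 / 10) (sub_nonneg.2 h2)]
  refine ⟨⟨s, mem_Ici.2 hs0, ?_⟩, forall_mem_image.2 fun t _ => ?_⟩
  · rw [gain_eq_sub_half (rate_eq_one hr hs h2r).le, rate_eq_one hr hs h2r]
  · rcases le_or_gt t (2 * r) with h | h
    · linarith [gain_le_sub_half (rate r) t, sub_half_rate_le_of_le hr h]
    · exact gain_rate_le_of_two_mul_lt hr hs h2r h4r h

end GaoMa

end

open GaoMa in
theorem stmt9_general (r : ℝ) (hr0 : 0 < r) (I : ℝ → ℝ)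
    (hI2 : ∀ t : ℝ, |t| ≤ 2 * r → I t = (t + 2 * r) ^ 2 / (8 * r))
    (hI3 : ∀ t : ℝ, 2 * r < t → I t = (t + 2 * r) ^ 2 / (4 * r) - t) :
    (r ≤ 1 / 5 →
      1 / 2 + max 0 (sSup ((fun t : ℝ => t - I t + min 1 (I t) / 2) '' Set.Ici 0))
        = 3 / 2 * r + 1 / 2) ∧
    (1 / 5 < r → r ≤ 1 / 2 →
      1 / 2 + max 0 (sSup ((fun t : ℝ => t - I t + min 1 (I t) / 2) '' Set.Ici 0))
        = Real.sqrt (1 - (1 - 2 * r) ^ 2)) ∧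
    (1 / 2 < r →
      1 / 2 + max 0 (sSup ((fun t : ℝ => t - I t + min 1 (I t) / 2) '' Set.Ici 0))
        = 1) := by
  have hI := eqOn_rate hI2 hI3
  have himage : (fun t : ℝ => t - I t + min 1 (I t) / 2) '' Ici 0 = gain (rate r) '' Ici 0 :=
    EqOn.image_eq fun t ht => by simp only [gain, hI ht]
  rw [himage]
  refine ⟨fun h => ?_, fun h1 h2 => ?_, fun h => ?_⟩
  · rw [(isGreatest_gain_rate_of_le hr0 h).csSup_eq, max_eq_right (by positivity)]; ring
  · have hsqrt : 1 / 2 ≤ √(1 - (1 - 2 * r) ^ 2) := Real.le_sqrt_of_sq_le (by nlinarith)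
    rw [(isGreatest_gain_rate_sqrt h1 h2).csSup_eq, max_eq_right (by linarith)]; ring
  · rw [(isGreatest_gain_rate_of_lt h).csSup_eq]; norm_num

theorem stmt9 (r : ℝ) (hr0 : 0 < r) (hr1 : r ≤ 1) (I : ℝ → ℝ)
    (hI1 : ∀ t : ℝ, t < -(2 * r) → I t = (t + 2 * r) ^ 2 / (4 * r))
    (hI2 : ∀ t : ℝ, |t| ≤ 2 * r → I t = (t + 2 * r) ^ 2 / (8 * r))
    (hI3 : ∀ t : ℝ, 2 * r < t → I t = (t + 2 * r) ^ 2 / (4 * r) - t) :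
    (r ≤ 1 / 5 →
      1 / 2 + max 0 (sSup ((fun t : ℝ => t - I t + min 1 (I t) / 2) '' Set.Ici 0))
        = 3 / 2 * r + 1 / 2) ∧
    (1 / 5 < r → r ≤ 1 / 2 →
      1 / 2 + max 0 (sSup ((fun t : ℝ => t - I t + min 1 (I t) / 2) '' Set.Ici 0))
        = Real.sqrt (1 - (1 - 2 * r) ^ 2)) ∧
    (1 / 2 < r →
      1 / 2 + max 0 (sSup ((fun t : ℝ => t - I t + min 1 (I t) / 2) '' Set.Ici 0))
        = 1) :=
  stmt9_general r hr0 I hI2 hI3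
end

section
/- Let r > 0 and define I : ℝ → [0,∞] by I(y) = ((r+1)/r)·y for y ≥ 0 and I(y) = ∞ for y < 0. Then 1/2 + max(0, sup_{t ≥ 0} { t − I(t) + min(1, I(t))/2 }) equals 1/2 if r ≤ 1, and equals 1 − 1/(1+r) if r > 1. -/
theorem stmt11 (r : ℝ) (hr : 0 < r) :
    (r ≤ 1 →
      1 / 2 + max 0 (sSup ((fun t : ℝ =>
          t - (r + 1) / r * t + min 1 ((r + 1) / r * t) / 2) '' Set.Ici 0))
        = 1 / 2) ∧
    (1 < r →
      1 / 2 + max 0 (sSup ((fun t : ℝ =>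
          t - (r + 1) / r * t + min 1 ((r + 1) / r * t) / 2) '' Set.Ici 0))
        = 1 - 1 / (1 + r)) := by
  have hr0 : r ≠ 0 := ne_of_gt hr
  constructor
  · intro h1
    have hc : (2 : ℝ) ≤ (r + 1) / r := by
      rw [le_div_iff₀ hr]; linarith
    have hsup : sSup ((fun t : ℝ =>
        t - (r + 1) / r * t + min 1 ((r + 1) / r * t) / 2) '' Set.Ici 0) = 0 := by
      apply IsGreatest.csSup_eq
      constructor
      · exact ⟨0, Set.mem_Ici.mpr le_rfl, by norm_num⟩
      · rintro y ⟨t, ht, rfl⟩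
        have ht0 : (0 : ℝ) ≤ t := Set.mem_Ici.mp ht
        simp only
        rcases le_total ((r + 1) / r * t) 1 with hct | hct
        · rw [min_eq_right hct]; nlinarith
        · rw [min_eq_left hct]; nlinarith
    rw [hsup]; norm_num
  · intro h1
    have hr1 : (0 : ℝ) < r + 1 := by linarith
    have hc1 : (1 : ℝ) < (r + 1) / r := by
      rw [lt_div_iff₀ hr]; linarith
    have hc2 : (r + 1) / r < 2 := by
      rw [div_lt_iff₀ hr]; linarith
    have hsup : sSup ((fun t : ℝ =>
        t - (r + 1) / r * t + min 1 ((r + 1) / r * t) / 2) '' Set.Ici 0)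
        = r / (r + 1) - 1 / 2 := by
      apply IsGreatest.csSup_eq
      constructor
      · refine ⟨r / (r + 1), Set.mem_Ici.mpr (by positivity), ?_⟩
        have h : (r + 1) / r * (r / (r + 1)) = 1 := by
          field_simp
        simp only [h, min_self]
        ring
      · rintro y ⟨t, ht, rfl⟩
        have ht0 : (0 : ℝ) ≤ t := Set.mem_Ici.mp ht
        simp only
        have hmul : (r + 1) / r * r = r + 1 := div_mul_cancel₀ _ hr0
        rcases le_total ((r + 1) / r * t) 1 with hct | hct
        · rw [min_eq_right hct]
          have key : (r + 1) * t ≤ r := by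
            have h := mul_le_mul_of_nonneg_right hct hr.le
            rwa [mul_right_comm, hmul, one_mul] at h
          have heq : r / (r + 1) - 1 / 2
              - (t - (r + 1) / r * t + (r + 1) / r * t / 2)
              = (r - (r + 1) * t) * (r - 1) / (2 * r * (r + 1)) := by
            field_simp
            ring
          have hpos : 0 ≤ (r - (r + 1) * t) * (r - 1) / (2 * r * (r + 1)) :=
            div_nonneg (mul_nonneg (by linarith) (by linarith)) (by positivity)
          linarith
        · rw [min_eq_left hct]
          have key : r ≤ (r + 1) * t := by
            have h := mul_le_mul_of_nonneg_right hct hr.le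
            rwa [mul_right_comm, hmul, one_mul] at h
          have heq : r / (r + 1) - 1 / 2
              - (t - (r + 1) / r * t + 1 / 2)
              = ((r + 1) * t - r) / (r * (r + 1)) := by
            field_simp
            ring
          have hpos : 0 ≤ ((r + 1) * t - r) / (r * (r + 1)) :=
            div_nonneg (by linarith) (by positivity)
          linarith
    rw [hsup, max_eq_right]
    · field_simp; ring
    · have : 1 / 2 ≤ r / (r + 1) := by
        rw [div_le_div_iff₀ (by norm_num) hr1]; linarith
      linarith
end

section
/- Let 0 < ρ ≤ 1 and r > 0, and define I(t) = (t − r + ρ)²/(4ρ) + r for t ∈ ℝ. Then 1/2 + max(0, sup_{t ≥ 0} { t − I(t) + min(1, I(t))/2 }) equals 1 − (max(√(max(1−r,0)) − √ρ, 0))² if ρ > (1−r)/4, and equals 1/2 + ρ + r/2 if ρ ≤ (1−r)/4. -/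
/-!
Since `t - I(t) = -(t - (r + ρ))² / (4ρ)`, the objective `t - I(t) + min(1, I(t))/2` is the
minimum of two downward parabolas, `1/2 - (t - (r + ρ))² / (4ρ)` with peak `1/2` at `r + ρ`, and
`ρ + r/2 - (t - (r + 3ρ))² / (8ρ)` with peak `ρ + r/2` at `r + 3ρ`. If `4ρ + r ≤ 1` the second
parabola is the smaller one at its own peak, which is then the supremum; if `ρ + r ≥ 1` the same
holds for the first one. Otherwise the supremum is attained where the parabolas cross, at
`I(t) = 1`, i.e. `t = r - ρ + 2√ρ√(1 - r)`, which lies between the two peaks; there the value is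
`1/2 - (√(1 - r) - √ρ)²`.
-/

open Set

namespace SparseMixtureDetection

/-- The function `I` of the statement. -/
noncomputable def rate (r ρ t : ℝ) : ℝ := (t - r + ρ) ^ 2 / (4 * ρ) + r

noncomputable def objective (r ρ t : ℝ) : ℝ := t - rate r ρ t + min 1 (rate r ρ t) / 2

variable {r ρ : ℝ}

theorem objective_eq_min (hρ : ρ ≠ 0) (t : ℝ) :
    objective r ρ t = min (1 / 2 - (t - (r + ρ)) ^ 2 / (4 * ρ))
      (ρ + r / 2 - (t - (r + 3 * ρ)) ^ 2 / (8 * ρ)) := by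
  rw [objective, ← min_div_div_right zero_le_two, ← min_add_add_left]
  congr 1 <;> (unfold rate; field_simp; ring)

theorem isGreatest_objective_of_le (hρ : 0 < ρ) (hr : 0 ≤ r) (h : ρ ≤ (1 - r) / 4) :
    IsGreatest (objective r ρ '' Ici 0) (ρ + r / 2) := by
  have hpeak : objective r ρ (r + 3 * ρ) = min (1 / 2 - ρ) (ρ + r / 2) := by
    rw [objective_eq_min hρ.ne']
    congr 1 <;> (field_simp; ring)
  refine ⟨⟨r + 3 * ρ, mem_Ici.2 (by positivity), ?_⟩, forall_mem_image.2 fun t _ => ?_⟩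
  · rw [hpeak, min_eq_right (by linarith)]
  · rw [objective_eq_min hρ.ne']
    exact (min_le_right _ _).trans (sub_le_self _ (by positivity))

theorem isGreatest_objective_of_one_le (hρ : 0 < ρ) (h : 1 ≤ ρ + r) :
    IsGreatest (objective r ρ '' Ici 0) (1 / 2) := by
  have hpeak : objective r ρ (r + ρ) = min (1 / 2) ((ρ + r) / 2) := by
    rw [objective_eq_min hρ.ne']
    congr 1 <;> (field_simp; ring)
  refine ⟨⟨r + ρ, by simp only [mem_Ici]; linarith, ?_⟩, forall_mem_image.2 fun t _ => ?_⟩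
  · rw [hpeak, min_eq_left (by linarith)]
  · rw [objective_eq_min hρ.ne']
    exact (min_le_left _ _).trans (sub_le_self _ (by positivity))

theorem isGreatest_objective_of_sq {a b : ℝ} (ha : 0 < a) (hab : a ≤ b) (hb : b ≤ 2 * a)
    (hb1 : b ≤ 1) (hρ : ρ = a ^ 2) (hr : r = 1 - b ^ 2) :
    IsGreatest (objective r ρ '' Ici 0) (1 / 2 - (b - a) ^ 2) := by
  subst hρ hr
  have hρ : a ^ 2 ≠ 0 := by positivity
  -- the crossing point `r - ρ + 2ab`, where `rate r ρ c = 1`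
  set c := 1 - (b - a) ^ 2
  have hcross :
      objective (1 - b ^ 2) (a ^ 2) c = min (1 / 2 - (b - a) ^ 2) (1 / 2 - (b - a) ^ 2) := by
    rw [objective_eq_min hρ]
    congr 1 <;> (field_simp; ring)
  refine ⟨⟨c, by simp only [mem_Ici, c]; nlinarith, by rw [hcross, min_self]⟩,
    forall_mem_image.2 fun t _ => ?_⟩
  rw [objective_eq_min hρ]
  rcases le_total c t with hct | htc
  · have hdist : 2 * a * (b - a) ≤ t - (1 - b ^ 2 + a ^ 2) := by nlinarith
    have hsq := pow_le_pow_left₀ (by nlinarith) hdist 2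
    have : (b - a) ^ 2 ≤ (t - (1 - b ^ 2 + a ^ 2)) ^ 2 / (4 * a ^ 2) := by
      rw [le_div_iff₀ (by positivity)]; nlinarith
    exact (min_le_left _ _).trans (by linarith)
  · have hdist : 2 * a * (2 * a - b) ≤ 1 - b ^ 2 + 3 * a ^ 2 - t := by nlinarith
    have hsq := pow_le_pow_left₀ (by nlinarith) hdist 2
    have : (2 * a - b) ^ 2 / 2 ≤ (t - (1 - b ^ 2 + 3 * a ^ 2)) ^ 2 / (8 * a ^ 2) := by
      rw [le_div_iff₀ (by positivity)]; nlinarith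
    exact (min_le_right _ _).trans (by nlinarith)

end SparseMixtureDetection

open SparseMixtureDetection

theorem stmt14_general (r ρ : ℝ) (hr : 0 < r) (hρ0 : 0 < ρ) :
    ((1 - r) / 4 < ρ →
      1 / 2 + max 0 (sSup ((fun t : ℝ =>
          t - ((t - r + ρ) ^ 2 / (4 * ρ) + r)
            + min 1 ((t - r + ρ) ^ 2 / (4 * ρ) + r) / 2) '' Set.Ici 0))
        = 1 - (max (Real.sqrt (max (1 - r) 0) - Real.sqrt ρ) 0) ^ 2) ∧
    (ρ ≤ (1 - r) / 4 →
      1 / 2 + max 0 (sSup ((fun t : ℝ =>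
          t - ((t - r + ρ) ^ 2 / (4 * ρ) + r)
            + min 1 ((t - r + ρ) ^ 2 / (4 * ρ) + r) / 2) '' Set.Ici 0))
        = 1 / 2 + ρ + r / 2) := by
  refine ⟨fun hρr => ?_, fun hρr => ?_⟩ <;>
    change 1 / 2 + max 0 (sSup (objective r ρ '' Ici 0)) = _
  · rcases le_total 1 (ρ + r) with hsum | hsum
    · have hsqrt : √(max (1 - r) 0) ≤ √ρ := Real.sqrt_le_sqrt (max_le (by linarith) hρ0.le)
      rw [(isGreatest_objective_of_one_le hρ0 hsum).csSup_eq, max_eq_right (sub_nonpos.2 hsqrt)]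
      norm_num
    · set a := √ρ
      set b := √(1 - r)
      have ha : 0 < a := Real.sqrt_pos.2 hρ0
      have ha2 : ρ = a ^ 2 := (Real.sq_sqrt hρ0.le).symm
      have hb2 : r = 1 - b ^ 2 := by rw [Real.sq_sqrt (by linarith)]; ring
      have hab : a ≤ b := Real.sqrt_le_sqrt (by linarith)
      have hb : b ≤ 2 * a := by nlinarith [Real.sqrt_nonneg (1 - r)]
      have hb1 : b ≤ 1 := Real.sqrt_le_one.2 (by linarith)
      rw [(isGreatest_objective_of_sq ha hab hb hb1 ha2 hb2).csSup_eq,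
        max_eq_left (by linarith : 0 ≤ 1 - r), max_eq_left (sub_nonneg.2 hab),
        max_eq_right (by nlinarith)]
      ring
  · rw [(isGreatest_objective_of_le hρ0 hr.le hρr).csSup_eq, max_eq_right (by positivity)]
    ring

theorem stmt14 (r ρ : ℝ) (hr : 0 < r) (hρ0 : 0 < ρ) (hρ1 : ρ ≤ 1) :
    ((1 - r) / 4 < ρ →
      1 / 2 + max 0 (sSup ((fun t : ℝ =>
          t - ((t - r + ρ) ^ 2 / (4 * ρ) + r)
            + min 1 ((t - r + ρ) ^ 2 / (4 * ρ) + r) / 2) '' Set.Ici 0))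
        = 1 - (max (Real.sqrt (max (1 - r) 0) - Real.sqrt ρ) 0) ^ 2) ∧
    (ρ ≤ (1 - r) / 4 →
      1 / 2 + max 0 (sSup ((fun t : ℝ =>
          t - ((t - r + ρ) ^ 2 / (4 * ρ) + r)
            + min 1 ((t - r + ρ) ^ 2 / (4 * ρ) + r) / 2) '' Set.Ici 0))
        = 1 / 2 + ρ + r / 2) :=
  stmt14_general r ρ hr hρ0
end

section
/- Let r > 0, ρ ∈ (−1,1), ρ ≠ 0, and y ∈ ℝ. Consider the constrained minimization of t₁² + t₂² − (2√r/ρ)t₁ + r/ρ² over (t₁,t₂) ∈ ℝ² subject to y = −r/ρ + (ρ/(1+ρ))t₁² − (ρ/(1−ρ))t₂². If ρy + r ≤ (1+ρ)r/4 then the minimum equals (ρ−1)(r + 2ρy)/(2ρ²), and if ρy + r > (1+ρ)r/4 then the minimum equals ((1+ρ)/ρ²)·(√(ρy + r) − √(r/(1+ρ)))². -/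
set_option maxHeartbeats 2000000 in
theorem stmt19 (r ρ y : ℝ) (hr : 0 < r) (h1 : -1 < ρ) (h2 : ρ < 1) (h0 : ρ ≠ 0) :
    (ρ * y + r ≤ (1 + ρ) * r / 4 →
      sInf {x : ℝ | ∃ t₁ t₂ : ℝ,
          y = -r / ρ + (ρ / (1 + ρ)) * t₁ ^ 2 - (ρ / (1 - ρ)) * t₂ ^ 2 ∧
          x = t₁ ^ 2 + t₂ ^ 2 - (2 * Real.sqrt r / ρ) * t₁ + r / ρ ^ 2}
        = (ρ - 1) * (r + 2 * ρ * y) / (2 * ρ ^ 2)) ∧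
    ((1 + ρ) * r / 4 < ρ * y + r →
      sInf {x : ℝ | ∃ t₁ t₂ : ℝ,
          y = -r / ρ + (ρ / (1 + ρ)) * t₁ ^ 2 - (ρ / (1 - ρ)) * t₂ ^ 2 ∧
          x = t₁ ^ 2 + t₂ ^ 2 - (2 * Real.sqrt r / ρ) * t₁ + r / ρ ^ 2}
        = ((1 + ρ) / ρ ^ 2) * (Real.sqrt (ρ * y + r) - Real.sqrt (r / (1 + ρ))) ^ 2) := by
  have h1p : (0:ℝ) < 1 + ρ := by linarith
  have h1m : (0:ℝ) < 1 - ρ := by linarith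
  have hρ2 : (0:ℝ) < ρ ^ 2 := by positivity
  have hR2 : (Real.sqrt r) ^ 2 = r := Real.sq_sqrt hr.le
  have hR0 : 0 < Real.sqrt r := Real.sqrt_pos.2 hr
  set R := Real.sqrt r with hRdef
  constructor
  · -- Case 1 : ρ y + r ≤ (1+ρ) r / 4
    intro h
    apply IsLeast.csInf_eq
    constructor
    · -- the value is attained
      have hb : 0 ≤ (1 - ρ) / ρ ^ 2 * ((1 + ρ) * r / 4 - (ρ * y + r)) :=
        mul_nonneg (by positivity) (by linarith)
      refine ⟨(1 + ρ) * R / (2 * ρ),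
        Real.sqrt ((1 - ρ) / ρ ^ 2 * ((1 + ρ) * r / 4 - (ρ * y + r))), ?_, ?_⟩
      · rw [Real.sq_sqrt hb, ← hR2]
        field_simp
        ring
      · rw [Real.sq_sqrt hb, ← hR2]
        field_simp
        ring
    · -- the value is a lower bound
      rintro x ⟨t₁, t₂, hy, rfl⟩
      have ht2 : t₂ ^ 2 = (1 - ρ) / (1 + ρ) * t₁ ^ 2 - (1 - ρ) * (ρ * y + r) / ρ ^ 2 := by
        rw [hy]; field_simp; ring
      rw [ht2]
      have key : t₁ ^ 2 + ((1 - ρ) / (1 + ρ) * t₁ ^ 2 - (1 - ρ) * (ρ * y + r) / ρ ^ 2)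
          - 2 * R / ρ * t₁ + r / ρ ^ 2 - (ρ - 1) * (r + 2 * ρ * y) / (2 * ρ ^ 2)
          = (2 * ρ * t₁ - (1 + ρ) * R) ^ 2 / (2 * ρ ^ 2 * (1 + ρ)) := by
        rw [← hR2]; field_simp; ring
      have hnn : 0 ≤ (2 * ρ * t₁ - (1 + ρ) * R) ^ 2 / (2 * ρ ^ 2 * (1 + ρ)) :=
        div_nonneg (sq_nonneg _) (by positivity)
      linarith [key, hnn]
  · -- Case 2 : (1+ρ) r / 4 < ρ y + r
    clear_value R
    intro h
    have hc : 0 < ρ * y + r := by nlinarith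
    set P := Real.sqrt (ρ * y + r) with hPdef
    set Q := Real.sqrt (r / (1 + ρ)) with hQdef
    set S := Real.sqrt (1 + ρ) with hSdef
    have hP2 : P ^ 2 = ρ * y + r := Real.sq_sqrt hc.le
    have hQ2 : Q ^ 2 = r / (1 + ρ) := Real.sq_sqrt (by positivity)
    have hS2 : S ^ 2 = 1 + ρ := Real.sq_sqrt h1p.le
    have hP0 : 0 < P := Real.sqrt_pos.2 hc
    have hQ0 : 0 < Q := Real.sqrt_pos.2 (by positivity)
    have hS0 : 0 < S := Real.sqrt_pos.2 h1p
    have hRSQ : R = S * Q := by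
      rw [hRdef, hSdef, hQdef, ← Real.sqrt_mul h1p.le]
      congr 1
      field_simp
    clear_value P Q S
    have hq2' : (1 + ρ) * Q ^ 2 = r := by rw [hQ2]; field_simp
    have hcond : (1 + ρ) * Q < 2 * P := by
      have hq : ((1 + ρ) * Q) ^ 2 < (2 * P) ^ 2 := by nlinarith [hq2', hP2]
      exact lt_of_pow_lt_pow_left₀ 2 (by positivity) hq
    apply IsLeast.csInf_eq
    constructor
    · -- the value is attained at t₁ = S P / ρ, t₂ = 0
      refine ⟨S * P / ρ, 0, ?_, ?_⟩
      · rw [div_pow, mul_pow, hS2, hP2]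
        field_simp
        ring
      · rw [← hR2, hRSQ, ← hS2]
        field_simp
        ring
    · -- the value is a lower bound
      rintro x ⟨t₁, t₂, hy, rfl⟩
      have ht2 : t₂ ^ 2 = (1 - ρ) / (1 + ρ) * t₁ ^ 2 - (1 - ρ) * (ρ * y + r) / ρ ^ 2 := by
        rw [hy]; field_simp; ring
      have h2nn : 0 ≤ t₂ ^ 2 := sq_nonneg _
      rw [ht2] at h2nn
      have hkey0 : ρ ^ 2 * (1 + ρ) * ((1 - ρ) / (1 + ρ) * t₁ ^ 2
          - (1 - ρ) * (ρ * y + r) / ρ ^ 2)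
          = (1 - ρ) * (ρ ^ 2 * t₁ ^ 2 - (1 + ρ) * (ρ * y + r)) := by
        field_simp
      have hgeq : (1 + ρ) * (ρ * y + r) ≤ ρ ^ 2 * t₁ ^ 2 := by
        have h3 := mul_nonneg (mul_nonneg hρ2.le h1p.le) h2nn
        rw [hkey0] at h3
        have h4 := (mul_nonneg_iff_of_pos_left h1m).mp h3
        linarith
      set T := |ρ * t₁| with hTdef
      have hT0 : 0 ≤ T := abs_nonneg _
      have hT2 : T ^ 2 = ρ ^ 2 * t₁ ^ 2 := by rw [hTdef, sq_abs]; ring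
      have hTt : R * (ρ * t₁) ≤ R * T :=
        mul_le_mul_of_nonneg_left (le_abs_self _) hR0.le
      have hTSP : S * P ≤ T := by
        refine le_of_pow_le_pow_left₀ two_ne_zero hT0 ?_
        rw [mul_pow, hS2, hP2, hT2]; exact hgeq
      have hplus : 0 ≤ T + S * P - S ^ 3 * Q := by
        have e : S ^ 3 * Q = S * ((1 + ρ) * Q) := by
          rw [pow_succ, hS2]; ring
        rw [e]
        have h5 : S * ((1 + ρ) * Q) ≤ S * (2 * P) :=
          mul_le_mul_of_nonneg_left hcond.le hS0.le
        have h6 : S * (2 * P) = 2 * (S * P) := by ring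
        linarith
      rw [ht2]
      have key : t₁ ^ 2 + ((1 - ρ) / (1 + ρ) * t₁ ^ 2
            - (1 - ρ) * (ρ * y + r) / ρ ^ 2) - 2 * R / ρ * t₁ + r / ρ ^ 2
            - (1 + ρ) / ρ ^ 2 * (P - Q) ^ 2
          = (2 * ρ ^ 2 * t₁ ^ 2 - 2 * (1 + ρ) * P ^ 2 + 2 * (1 + ρ) ^ 2 * (P * Q)
              - 2 * (1 + ρ) * R * (ρ * t₁)) / (ρ ^ 2 * (1 + ρ)) := by
        rw [← hP2, ← hq2']
        field_simp
        ring
      have hbridge : 2 * (T - S * P) * (T + S * P - S ^ 3 * Q)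
            + 2 * (1 + ρ) * (R * T - R * (ρ * t₁))
          = 2 * ρ ^ 2 * t₁ ^ 2 - 2 * (1 + ρ) * P ^ 2 + 2 * (1 + ρ) ^ 2 * (P * Q)
              - 2 * (1 + ρ) * R * (ρ * t₁) := by
        linear_combination 2 * hT2 + (-2 * P ^ 2 + 2 * P * Q * (S ^ 2 + (1 + ρ))
          - 2 * T * R) * hS2 + 2 * T * S ^ 2 * hRSQ
      have hA : 0 ≤ 2 * (T - S * P) * (T + S * P - S ^ 3 * Q) :=
        mul_nonneg (by linarith) hplus
      have hB : 0 ≤ 2 * (1 + ρ) * (R * T - R * (ρ * t₁)) :=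
        mul_nonneg (by linarith) (by linarith)
      have hD : 0 ≤ 2 * ρ ^ 2 * t₁ ^ 2 - 2 * (1 + ρ) * P ^ 2 + 2 * (1 + ρ) ^ 2 * (P * Q)
          - 2 * (1 + ρ) * R * (ρ * t₁) := by linarith
      have hdiv : 0 ≤ (2 * ρ ^ 2 * t₁ ^ 2 - 2 * (1 + ρ) * P ^ 2 + 2 * (1 + ρ) ^ 2 * (P * Q)
          - 2 * (1 + ρ) * R * (ρ * t₁)) / (ρ ^ 2 * (1 + ρ)) :=
        div_nonneg hD (by positivity)
      linarith [key, hdiv]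
end
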